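/- arXiv:1604.00934 — 3 statements merged into one kernel-verified Lean document; each statement's English description precedes it below -/
import Mathlib

section
/- Let G₁ and G₂ be simple graphs on the same vertex set of n vertices with maximum degrees Δ₁ and Δ₂ respectively. If Δ₁·Δ₂ < n/2, then G₁ and G₂ pack, i.e., there exists a permutation σ of the vertex set such that the edge sets of G₁ and σ(G₂) are disjoint. -/
/-!
Choose `σ` for which the conflict graph `G₂ ⊓ G₁.comap σ` is minimal. If it has an edge `uv`,
call `w` bad when it is reachable from `u` by a `G₂`-edge followed by a `G₁.comap σ`-edge, or the
other way round. There are at most `2 Δ₁ Δ₂` such walks, and `u` is reached twice (through `v`),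
so together with `v` at most `2 Δ₁ Δ₂ < n` vertices are excluded. For a remaining `w`,
composing `σ` with the transposition `(u w)` destroys the conflict `uv` and creates none,
contradicting minimality.
-/

open Finset

namespace SimpleGraph

variable {V W : Type*}

theorem degree_comap_equiv [Fintype V] [Fintype W] (G : SimpleGraph W) [DecidableRel G.Adj]
    (σ : V ≃ W) (v : V) : (G.comap σ).degree v = G.degree (σ v) := by
  rw [← card_neighborSet_eq_degree, ← card_neighborSet_eq_degree]
  exact Fintype.card_congr (σ.subtypeEquiv fun _ => Iff.rfl)

theorem maxDegree_comap_equiv_le [Fintype V] [Fintype W] (G : SimpleGraph W) [DecidableRel G.Adj]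
    (σ : V ≃ W) : (G.comap σ).maxDegree ≤ G.maxDegree :=
  maxDegree_le_of_forall_degree_le _ _ fun v =>
    (degree_comap_equiv G σ v).trans_le (G.degree_le_maxDegree _)

theorem card_biUnion_neighborFinset_le [Fintype V] [DecidableEq V] (G H : SimpleGraph V)
    [DecidableRel G.Adj] [DecidableRel H.Adj] (u : V) :
    #((G.neighborFinset u).biUnion fun x => H.neighborFinset x) ≤ G.maxDegree * H.maxDegree := by
  grw [card_biUnion_le_card_mul _ _ _ fun x _ => (H.card_neighborFinset_eq_degree x).trans_le
    (H.degree_le_maxDegree x), card_neighborFinset_eq_degree, degree_le_maxDegree]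

theorem inf_comap_swap_le [DecidableEq V] {G H : SimpleGraph V} {u w : V}
    (hGH : ∀ z, G.Adj u z → ¬ H.Adj z w) (hHG : ∀ z, H.Adj u z → ¬ G.Adj z w) :
    G ⊓ H.comap (Equiv.swap u w) ≤ G ⊓ H := by
  rintro a b ⟨hG, hH⟩
  refine ⟨hG, ?_⟩
  -- only pairs meeting `{u, w}` move, and a new conflict there is a forbidden walk from `u` to `w`
  simp only [comap_adj, Equiv.swap_apply_def] at hH
  split_ifs at hH <;> subst_vars <;> grind [adj_comm, SimpleGraph.irrefl]

theorem inf_comap_swap_lt [DecidableEq V] {G H : SimpleGraph V} {u v w : V}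
    (hG : G.Adj u v) (hH : H.Adj u v) (hwv : w ≠ v)
    (hGH : ∀ z, G.Adj u z → ¬ H.Adj z w) (hHG : ∀ z, H.Adj u z → ¬ G.Adj z w) :
    G ⊓ H.comap (Equiv.swap u w) < G ⊓ H := by
  refine lt_of_le_of_ne (inf_comap_swap_le hGH hHG) fun heq => ?_
  have huv : (G ⊓ H.comap (Equiv.swap u w)).Adj u v := heq ▸ ⟨hG, hH⟩
  have hvu : v ≠ u := hG.ne'
  simp only [inf_adj, comap_adj, Equiv.swap_apply_left,
    Equiv.swap_apply_of_ne_of_ne hvu hwv.symm] at huv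
  exact hGH v hG huv.2.symm

theorem exists_swap_partner [Fintype V] [DecidableEq V] {G H : SimpleGraph V}
    [DecidableRel G.Adj] [DecidableRel H.Adj] {u v : V} (hG : G.Adj u v) (hH : H.Adj u v)
    (hcard : 2 * (G.maxDegree * H.maxDegree) < Fintype.card V) :
    ∃ w, w ≠ v ∧ (∀ z, G.Adj u z → ¬ H.Adj z w) ∧ (∀ z, H.Adj u z → ¬ G.Adj z w) := by
  set B₁ := (G.neighborFinset u).biUnion fun x => H.neighborFinset x
  set B₂ := (H.neighborFinset u).biUnion fun x => G.neighborFinset x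
  have hu : u ∈ B₁ ∩ B₂ := by
    simp only [B₁, B₂, mem_inter, mem_biUnion, mem_neighborFinset]
    exact ⟨⟨v, hG, hH.symm⟩, v, hH, hG.symm⟩
  have hB : #(insert v (B₁ ∪ B₂)) < #(univ : Finset V) := by
    have := card_union_add_card_inter B₁ B₂
    have := card_pos.mpr ⟨u, hu⟩
    have := card_biUnion_neighborFinset_le G H u
    have := card_biUnion_neighborFinset_le H G u
    have := card_insert_le v (B₁ ∪ B₂)
    rw [card_univ]
    linarith
  obtain ⟨w, -, hw⟩ := exists_mem_notMem_of_card_lt_card hB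
  simp only [mem_insert, mem_union, mem_biUnion, mem_neighborFinset, B₁, B₂, not_or,
    not_exists, not_and] at hw
  exact ⟨w, hw.1, hw.2.1, hw.2.2⟩

theorem exists_perm_inf_comap_eq_bot [Fintype V] [DecidableEq V] (G₁ G₂ : SimpleGraph V)
    [DecidableRel G₁.Adj] [DecidableRel G₂.Adj]
    (hcard : 2 * (G₁.maxDegree * G₂.maxDegree) < Fintype.card V) :
    ∃ σ : Equiv.Perm V, G₂ ⊓ G₁.comap σ = ⊥ := by
  obtain ⟨_, ⟨σ, rfl⟩, hmin⟩ := wellFounded_lt.has_min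
    (Set.range fun σ : Equiv.Perm V => G₂ ⊓ G₁.comap σ) (Set.range_nonempty _)
  refine ⟨σ, eq_bot_iff_forall_not_adj.mpr fun u v ⟨h₂, h₁⟩ => ?_⟩
  have hΔ : 2 * (G₂.maxDegree * (G₁.comap σ).maxDegree) < Fintype.card V := by
    grw [maxDegree_comap_equiv_le]; rwa [mul_comm G₂.maxDegree]
  obtain ⟨w, hwv, hGH, hHG⟩ := exists_swap_partner h₂ h₁ hΔ
  exact hmin _ ⟨σ * Equiv.swap u w, rfl⟩ (inf_comap_swap_lt h₂ h₁ hwv hGH hHG)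

end SimpleGraph

/-- Sauer–Spencer theorem: if `Δ₁·Δ₂ < n/2` then `G₁` and `G₂` pack. -/
theorem stmt_11 {V : Type*} [Fintype V] [DecidableEq V]
    (G₁ G₂ : SimpleGraph V) [DecidableRel G₁.Adj] [DecidableRel G₂.Adj]
    (h : (G₁.maxDegree : ℝ) * (G₂.maxDegree : ℝ) < (Fintype.card V : ℝ) / 2) :
    ∃ σ : Equiv.Perm V, ∀ u v : V, G₂.Adj u v → ¬ G₁.Adj (σ u) (σ v) := by
  have hcard : 2 * (G₁.maxDegree * G₂.maxDegree) < Fintype.card V := by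
    have : (2 * (G₁.maxDegree * G₂.maxDegree) : ℝ) < Fintype.card V := by linarith
    exact_mod_cast this
  obtain ⟨σ, hσ⟩ := SimpleGraph.exists_perm_inf_comap_eq_bot G₁ G₂ hcard
  exact ⟨σ, fun u v h₂ h₁ => (SimpleGraph.eq_bot_iff_forall_not_adj.mp hσ) u v ⟨h₂, h₁⟩⟩
end

section
/- Let ε ∈ (0, 1/2) and δ with 0 < δ ≤ ε/10. Let z, n be positive integers and M a positive integer with Mz ≤ n. Let X ⊆ Z with z/(2(1+δ)) < |X| ≤ z/2 and Y ⊆ W with |Y| ≤ n/2. Suppose d_H(x) ≤ M(1+δ) for all x ∈ X, d_H(y) = 1 for all y ∈ W, every vertex of W has more than (1/2 + ε/2)z neighbours in Z, so that e(X, Y) ≥ |Y|·((ε/2)z + |X| − z/2). Then d_H(X) ≤ e(X,Y) + (n − |Y|). -/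
/-!
Every vertex of `Y` has at least `c = εz/2 + |X| - z/2` neighbours in `X`, and the lower bound
`|X| > z/(2(1+δ)) ≥ (1-δ)z/2` gives `c ≥ (ε-δ)z/2 ≥ δ`. Hence
`e(X,Y) + n - |Y| ≥ n - (1-δ)|Y| ≥ (1+δ)n/2`, whereas `d_H(X) ≤ (1+δ)M|X| ≤ (1+δ)Mz/2 ≤ (1+δ)n/2`.
-/

lemma mul_one_sub_le_div_one_add {a δ : ℝ} (ha : 0 ≤ a) (hδ : -1 < δ) :
    a * (1 - δ) ≤ a / (1 + δ) := by
  rw [le_div_iff₀ (by linarith)]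
  nlinarith [mul_nonneg ha (sq_nonneg δ)]

lemma le_mul_add_sub_half_of_div_lt {ε δ z x : ℝ} (hz : 1 ≤ z) (hδ : 0 ≤ δ) (hεδ : 3 * δ ≤ ε)
    (hx : z / (2 * (1 + δ)) < x) : δ ≤ ε / 2 * z + x - z / 2 := by
  have hx' : z / 2 * (1 - δ) < x := by
    calc z / 2 * (1 - δ) ≤ z / 2 / (1 + δ) := mul_one_sub_le_div_one_add (by linarith) (by linarith)
      _ = z / (2 * (1 + δ)) := by rw [div_div]
      _ < x := hx
  nlinarith

lemma sum_le_half_mul_of_card_le_half {α : Type*} {s : Finset α} {f : α → ℝ} {M b z n : ℝ}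
    (hf : ∀ x ∈ s, f x ≤ M * b) (hM : 0 ≤ M) (hb : 0 ≤ b) (hs : (s.card : ℝ) ≤ z / 2)
    (hMz : M * z ≤ n) : ∑ x ∈ s, f x ≤ n * b / 2 := by
  calc ∑ x ∈ s, f x ≤ s.card * (M * b) := by
        simpa only [nsmul_eq_mul] using Finset.sum_le_card_nsmul s f (M * b) hf
    _ ≤ z / 2 * (M * b) := by gcongr
    _ = M * z * b / 2 := by ring
    _ ≤ n * b / 2 := by gcongr

lemma le_add_sub_of_le_half_mul_one_add {D e n y c δ : ℝ} (hD : D ≤ n * (1 + δ) / 2)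
    (he : y * c ≤ e) (hy0 : 0 ≤ y) (hy : y ≤ n / 2) (hδc : δ ≤ c) (hδ1 : δ ≤ 1) :
    D ≤ e + (n - y) := by
  nlinarith [mul_le_mul_of_nonneg_left hδc hy0, mul_le_mul_of_nonneg_left hy (by linarith : 0 ≤ 1 - δ)]

theorem stmt_15_general {V : Type*} [Fintype V] [DecidableEq V]
    (G : SimpleGraph V) [DecidableRel G.Adj]
    (ε δ : ℝ) (hε : ε ∈ Set.Ioo (0:ℝ) (1/2)) (hδ0 : 0 < δ) (hδ : δ ≤ ε / 10)
    (z n : ℕ)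
    (hzpos : 0 < z)
    (M : ℕ) (hMz : M * z ≤ n)
    (dH : V → ℕ) (X Y : Finset V)
    (hXl : (z : ℝ) / (2 * (1 + δ)) < X.card) (hXu : (X.card : ℝ) ≤ z / 2)
    (hYu : (Y.card : ℝ) ≤ (n : ℝ) / 2)
    (hdX : ∀ x ∈ X, (dH x : ℝ) ≤ M * (1 + δ))
    (hE : (Y.card : ℝ) * ((ε / 2) * z + X.card - z / 2) ≤
      ∑ x ∈ X, ((G.neighborFinset x ∩ Y).card : ℝ)) :
    (∑ x ∈ X, (dH x : ℝ)) ≤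
      (∑ x ∈ X, ((G.neighborFinset x ∩ Y).card : ℝ)) + ((n : ℝ) - Y.card) := by
  have hz : (1 : ℝ) ≤ z := by exact_mod_cast hzpos
  have hexcess : δ ≤ ε / 2 * z + X.card - z / 2 :=
    le_mul_add_sub_half_of_div_lt hz hδ0.le (by linarith) hXl
  have hdegX : ∑ x ∈ X, (dH x : ℝ) ≤ n * (1 + δ) / 2 :=
    sum_le_half_mul_of_card_le_half hdX (Nat.cast_nonneg M) (by linarith) hXu
      (by exact_mod_cast hMz)
  exact le_add_sub_of_le_half_mul_one_add hdegX hE (Nat.cast_nonneg _) hYu hexcess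
    (by linarith [hε.2])

/-- Case (c) of the key embedding lemma: the Gale–Ryser cut condition
`d_H(X) ≤ e(X,Y) + (n − |Y|)` when `z/(2(1+δ)) < |X| ≤ z/2` and `|Y| ≤ n/2`. -/
theorem stmt_15 {V : Type*} [Fintype V] [DecidableEq V]
    (G : SimpleGraph V) [DecidableRel G.Adj]
    (ε δ : ℝ) (hε : ε ∈ Set.Ioo (0:ℝ) (1/2)) (hδ0 : 0 < δ) (hδ : δ ≤ ε / 10)
    (Z W : Finset V) (z n : ℕ) (hz : Z.card = z) (hw : W.card = n)
    (hzpos : 0 < z) (hnpos : 0 < n)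
    (M : ℕ) (hM : 0 < M) (hMz : M * z ≤ n)
    (dH : V → ℕ) (X Y : Finset V) (hXZ : X ⊆ Z) (hYW : Y ⊆ W)
    (hXl : (z : ℝ) / (2 * (1 + δ)) < X.card) (hXu : (X.card : ℝ) ≤ z / 2)
    (hYu : (Y.card : ℝ) ≤ (n : ℝ) / 2)
    (hdX : ∀ x ∈ X, (dH x : ℝ) ≤ M * (1 + δ))
    (hdW : ∀ y ∈ W, dH y = 1)
    (hdegW : ∀ y ∈ W, (1 / 2 + ε / 2) * z < ((G.neighborFinset y ∩ Z).card : ℝ))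
    (hE : (Y.card : ℝ) * ((ε / 2) * z + X.card - z / 2) ≤
      ∑ x ∈ X, ((G.neighborFinset x ∩ Y).card : ℝ)) :
    (∑ x ∈ X, (dH x : ℝ)) ≤
      (∑ x ∈ X, ((G.neighborFinset x ∩ Y).card : ℝ)) + ((n : ℝ) - Y.card) :=
  stmt_15_general G ε δ hε hδ0 hδ z n hzpos M hMz dH X Y hXl hXu hYu hdX hE
end

section
/- Let ε ∈ (0, 1/2) and δ with 0 < δ ≤ ε/10. Let z, n be positive integers with z > 2/ε, M a positive integer with Mz ≤ n. Let X ⊆ Z with |X| > z/(2(1+δ)) and Y ⊆ W with |Y| > n/2. Suppose d_H(X) ≤ M(1+δ)|X|, all W-degrees in H equal 1, and e(X, Y) ≥ |X|·(|Y| − n/2 + εn). Then d_H(X) ≤ (n − |Y|) + e(X, Y). -/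
/-!
Since `M z ≤ n` and `ε z > 2`, we get `M (1 + δ) ≤ 2 M ≤ ε n ≤ |Y| - n/2 + ε n`, so the assumed
bound `d_H(X) ≤ M (1 + δ) |X|` is already dominated by `e(X, Y)`; the term `n - |Y|` is nonnegative.
-/

lemma two_mul_le_mul_of_mul_le {ε M z n : ℝ} (hε : 0 < ε) (hzε : 2 / ε < z) (hM : 0 ≤ M)
    (hMz : M * z ≤ n) : 2 * M ≤ ε * n := by
  have hεz : 2 < ε * z := by rwa [div_lt_iff₀ hε, mul_comm] at hzε
  calc 2 * M ≤ ε * z * M := by gcongr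
    _ = ε * (M * z) := by ring
    _ ≤ ε * n := by gcongr

theorem stmt_17_general {V : Type*} [Fintype V] [DecidableEq V]
    (G : SimpleGraph V) [DecidableRel G.Adj]
    (ε δ : ℝ) (hε : ε ∈ Set.Ioo (0:ℝ) (1/2)) (hδ : δ ≤ ε / 10)
    (W : Finset V) (z n : ℕ) (hw : W.card = n)
    (hzε : 2 / ε < (z : ℝ))
    (M : ℕ) (hMz : M * z ≤ n)
    (dH : V → ℕ) (X Y : Finset V) (hYW : Y ⊆ W)
    (hYl : (n : ℝ) / 2 < Y.card)
    (hdX : (∑ x ∈ X, (dH x : ℝ)) ≤ M * (1 + δ) * X.card)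
    (hE : (X.card : ℝ) * ((Y.card : ℝ) - (n : ℝ) / 2 + ε * n) ≤
      ∑ x ∈ X, ((G.neighborFinset x ∩ Y).card : ℝ)) :
    (∑ x ∈ X, (dH x : ℝ)) ≤
      ((n : ℝ) - Y.card) + ∑ x ∈ X, ((G.neighborFinset x ∩ Y).card : ℝ) := by
  obtain ⟨hε0, hε2⟩ := hε
  have hYn : (Y.card : ℝ) ≤ n := by rw [← hw]; exact_mod_cast Finset.card_le_card hYW
  have hMεn := two_mul_le_mul_of_mul_le hε0 hzε M.cast_nonneg
    (by exact_mod_cast hMz : (M : ℝ) * z ≤ n)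
  have hMδ : (M : ℝ) * (1 + δ) ≤ Y.card - n / 2 + ε * n := by
    nlinarith [M.cast_nonneg (α := ℝ)]
  calc (∑ x ∈ X, (dH x : ℝ)) ≤ M * (1 + δ) * X.card := hdX
    _ ≤ X.card * (Y.card - n / 2 + ε * n) := by rw [mul_comm _ (X.card : ℝ)]; gcongr
    _ ≤ ∑ x ∈ X, ((G.neighborFinset x ∩ Y).card : ℝ) := hE
    _ ≤ _ := le_add_of_nonneg_left (by linarith)

/-- Case (e) of the key embedding lemma:
`d_H(X) ≤ (n − |Y|) + e(X,Y)` when `|X| > z/(2(1+δ))` and `|Y| > n/2`. -/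
theorem stmt_17 {V : Type*} [Fintype V] [DecidableEq V]
    (G : SimpleGraph V) [DecidableRel G.Adj]
    (ε δ : ℝ) (hε : ε ∈ Set.Ioo (0:ℝ) (1/2)) (hδ0 : 0 < δ) (hδ : δ ≤ ε / 10)
    (Z W : Finset V) (z n : ℕ) (hz : Z.card = z) (hw : W.card = n)
    (hzpos : 0 < z) (hnpos : 0 < n) (hzε : 2 / ε < (z : ℝ))
    (M : ℕ) (hM : 0 < M) (hMz : M * z ≤ n)
    (dH : V → ℕ) (X Y : Finset V) (hXZ : X ⊆ Z) (hYW : Y ⊆ W)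
    (hXl : (z : ℝ) / (2 * (1 + δ)) < X.card)
    (hYl : (n : ℝ) / 2 < Y.card)
    (hdX : (∑ x ∈ X, (dH x : ℝ)) ≤ M * (1 + δ) * X.card)
    (hdW : ∀ y ∈ W, dH y = 1)
    (hE : (X.card : ℝ) * ((Y.card : ℝ) - (n : ℝ) / 2 + ε * n) ≤
      ∑ x ∈ X, ((G.neighborFinset x ∩ Y).card : ℝ)) :
    (∑ x ∈ X, (dH x : ℝ)) ≤
      ((n : ℝ) - Y.card) + ∑ x ∈ X, ((G.neighborFinset x ∩ Y).card : ℝ) :=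
  stmt_17_general G ε δ hε hδ W z n hw hzε M hMz dH X Y hYW hYl hdX hE
end
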